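/- arXiv:2206.05421 — 3 statements merged into one kernel-verified Lean document; each statement's English description precedes it below -/
import Mathlib

section
/- Let P be a graphoid over V, let π be a permutation with covered edge j → k in the induced DAG G_π, let H be the DAG obtained by reversing j → k in G_π, and let τ = tuck(π, j, k). Then: (a) τ is a causal order of H; (b) E(G_τ) ⊆ E(H); (c) |E(G_τ)| ≤ |E(G_π)|; and (d) I(G_π) ⊆ I(G_τ). -/
open Classical
attribute [local instance] Classical.propDecidable

variable {V : Type} [Fintype V] [DecidableEq V]

/-- A conditional independence model over variable set `V`:
`I A B C` means `A` is independent of `B` given `C`. -/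
abbrev IndepModel (V : Type) :=
  Finset V → Finset V → Finset V → Prop

/-- Semigraphoid axioms. -/
structure Semigraphoid (I : IndepModel V) : Prop where
  symm : ∀ A B C, I A B C → I B A C
  decomposition : ∀ A B W C, I A (B ∪ W) C → I A B C ∧ I A W C
  weakUnion : ∀ A B W C, I A (B ∪ W) C → I A B (C ∪ W)
  contraction : ∀ A B W C, I A B C → I A W (C ∪ B) → I A (B ∪ W) C

/-- Graphoid axioms. -/
structure Graphoid (I : IndepModel V) extends Semigraphoid I : Prop where
  intersection : ∀ A B W C, I A B (C ∪ W) → I A W (C ∪ B) → I A (B ∪ W) C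

/-- Compositional graphoid axioms. -/
structure CompGraphoid (I : IndepModel V) extends Graphoid I : Prop where
  composition : ∀ A B W C, I A B C → I A W C → I A (B ∪ W) C

/-- `M` is a Markov blanket of `X` relative to `Z`. -/
def MarkovBlanket (I : IndepModel V) (X : V) (Z M : Finset V) : Prop :=
  M ⊆ Z ∧ I {X} (Z \ M) M

/-- `M` is a Markov boundary (minimal Markov blanket) of `X` relative to `Z`. -/
def MarkovBoundary (I : IndepModel V) (X : V) (Z M : Finset V) : Prop :=
  MarkovBlanket I X Z M ∧ ∀ M' ⊂ M, ¬ I {X} (Z \ M') M'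

/-- A directed graph on `V`, given by its finite set of directed edges. -/
abbrev EdgeSet (V : Type) := Finset (V × V)

def Adj (E : EdgeSet V) (a b : V) : Prop := (a, b) ∈ E

/-- Acyclicity: no vertex reaches itself by a nontrivial directed path. -/
def IsDAG (E : EdgeSet V) : Prop := ∀ v, ¬ Relation.TransGen (Adj E) v v

def parents (E : EdgeSet V) (v : V) : Finset V :=
  (E.filter (fun e => e.2 = v)).image Prod.fst

def IsCollider (E : EdgeSet V) (x y z : V) : Prop := Adj E x y ∧ Adj E z y

/-- The middle vertex `y` of a path triple `x - y - z` does not block the path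
given conditioning set `C`. -/
def ActiveTriple (E : EdgeSet V) (C : Finset V) (x y z : V) : Prop :=
  (IsCollider E x y z ∧ ∃ d ∈ C, Relation.ReflTransGen (Adj E) y d) ∨
  (¬ IsCollider E x y z ∧ y ∉ C)

/-- `a` and `b` are d-connected given `C` in the graph `E`. -/
def DConn (E : EdgeSet V) (C : Finset V) (a b : V) : Prop :=
  ∃ p : List V, 2 ≤ p.length ∧ p.head? = some a ∧ p.getLast? = some b ∧
    (∀ (i : ℕ) (h : i + 1 < p.length),
      Adj E (p.get ⟨i, by omega⟩) (p.get ⟨i + 1, h⟩) ∨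
      Adj E (p.get ⟨i + 1, h⟩) (p.get ⟨i, by omega⟩)) ∧
    (∀ (i : ℕ) (h : i + 2 < p.length),
      ActiveTriple E C (p.get ⟨i, by omega⟩) (p.get ⟨i + 1, by omega⟩) (p.get ⟨i + 2, h⟩))

/-- `A` and `B` are d-separated given `C`. -/
def DSep (E : EdgeSet V) (A B C : Finset V) : Prop :=
  ∀ a ∈ A, ∀ b ∈ B, ¬ DConn E C a b

def PairwiseDisjoint3 (A B C : Finset V) : Prop :=
  Disjoint A B ∧ Disjoint A C ∧ Disjoint B C

/-- `I(G) ⊆ I(P)`: every d-separation of the graph is an independence of `I`. -/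
def Markovian (E : EdgeSet V) (I : IndepModel V) : Prop :=
  ∀ A B C, PairwiseDisjoint3 A B C → DSep E A B C → I A B C

/-- `I(P) ⊆ I(G)`: every independence of `I` is a d-separation of the graph. -/
def FaithfulTo (E : EdgeSet V) (I : IndepModel V) : Prop :=
  ∀ A B C, PairwiseDisjoint3 A B C → I A B C → DSep E A B C

/-- `I(E) ⊆ I(E')` : every d-separation statement of `E` holds in `E'`. -/
def ISub (E E' : EdgeSet V) : Prop :=
  ∀ A B C, PairwiseDisjoint3 A B C → DSep E A B C → DSep E' A B C

/-- Markov equivalence: same d-separation statements. -/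
def MEquiv (E E' : EdgeSet V) : Prop := ISub E E' ∧ ISub E' E

/-- Markovian DAGs. -/
def CMC (I : IndepModel V) : Set (EdgeSet V) := {G | IsDAG G ∧ Markovian G I}

/-- Faithful DAGs. -/
def CFC (I : IndepModel V) : Set (EdgeSet V) := {G | G ∈ CMC I ∧ FaithfulTo G I}

/-- SGS-minimal DAGs: Markovian with no Markovian proper subgraph. -/
def SGSmin (I : IndepModel V) : Set (EdgeSet V) :=
  {G | G ∈ CMC I ∧ ∀ G' ⊆ G, G' ∈ CMC I → G' = G}

/-- Frugal DAGs: Markovian with minimal edge count. -/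
def Fr (I : IndepModel V) : Set (EdgeSet V) :=
  {G | G ∈ CMC I ∧ ∀ G' ∈ CMC I, G.card ≤ G'.card}

/-- Uniquely frugal DAGs. -/
def uFr (I : IndepModel V) : Set (EdgeSet V) :=
  {G | G ∈ Fr I ∧ ∀ G' ∈ Fr I, MEquiv G' G}

/-- P-minimal DAGs: Markovian `G` such that no Markovian `G'` has `I(G) ⊊ I(G')`. -/
def Pm (I : IndepModel V) : Set (EdgeSet V) :=
  {G | G ∈ CMC I ∧ ∀ G' ∈ CMC I, ISub G G' → ISub G' G}

/-- Uniquely P-minimal DAGs. -/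
def uPm (I : IndepModel V) : Set (EdgeSet V) :=
  {G | G ∈ Pm I ∧ ∀ G' ∈ Pm I, MEquiv G' G}

/-- A list is a permutation of the vertices of `V`. -/
def IsPermList (π : List V) : Prop := π.Nodup ∧ ∀ v : V, v ∈ π

/-- The set of vertices preceding `k` in the permutation `π`. -/
def pre (π : List V) (k : V) : Finset V := (π.takeWhile (fun x => x != k)).toFinset

/-- The DAG induced from a permutation `π` by the Raskutti–Uhler (RU) construction:
`j → k` is an edge iff `j` precedes `k` in `π` and `X_j` is dependent on `X_k`
given all other predecessors of `k`. -/
noncomputable def RUedges (I : IndepModel V) (π : List V) : EdgeSet V :=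
  Finset.univ.filter
    (fun e => e.1 ∈ pre π e.2 ∧ ¬ I {e.1} {e.2} ((pre π e.2).erase e.1))

/-- `j → k` is a covered edge of `E`. -/
def CoveredEdge (E : EdgeSet V) (j k : V) : Prop :=
  (j, k) ∈ E ∧ parents E j = (parents E k).erase j

/-- `j → k` is a singular edge of `E`: no directed path from `j` to `k` other than
the edge itself. -/
def SingularEdge (E : EdgeSet V) (j k : V) : Prop :=
  (j, k) ∈ E ∧
    ∀ i, Relation.TransGen (Adj E) j i → Relation.TransGen (Adj E) i k → i = j ∨ i = k

/-- `π` is a causal order of the graph `E`: every ancestor of a vertex precedes it. -/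
def CausalOrder (E : EdgeSet V) (π : List V) : Prop :=
  IsPermList π ∧ ∀ a b, Relation.TransGen (Adj E) a b → π.idxOf a < π.idxOf b

/-- Two permutations differ by one adjacent transposition. -/
def AdjTrans (π τ : List V) : Prop :=
  ∃ (δ₁ δ₂ : List V) (a b : V), π = δ₁ ++ a :: b :: δ₂ ∧ τ = δ₁ ++ b :: a :: δ₂

/-- The non-descendants of `j` in the graph `E`. -/
noncomputable def nonDesc (E : EdgeSet V) (j : V) : Finset V :=
  Finset.univ.filter (fun i => ¬ Relation.ReflTransGen (Adj E) j i)

/-!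
Tucking changes only the predecessor sets of `j`, `k` and of the vertices of `δ₂`, and none of
these changes creates an edge outside `H`. The intersection axiom turns the non-edges of `G_π`
into its local Markov property; at `j` and at `k`, whose parent sets differ only by `j`,
contraction then gives `x ⊥ {j, k} | pre_π(j) \ {x}` for every predecessor `x` of `j` that is not
a parent, so in `G_τ` the vertex `j` gains only the parent `k` and `k` gains no parent. A vertex
`y` of `δ₂` gains the predecessor `k`, but `k ⊥ y | pre_π(y)`, so by contraction and weak union
`y` gains no parent. Thus `G_τ ⊆ H`, and `H` has as many edges as `G_π`.

For (d), d-connection is tracked by active trails, walks that remember whether the current vertex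
was entered along an edge into it. A trail of `G_τ` is a trail of its supergraph `H`, and
reversing the covered edge `k → j` of `H` back only exchanges a trail entering `j` for one
entering `k`.
-/

section Precedence

omit [Fintype V]

theorem pre_cons (a : V) (l : List V) (y : V) :
    pre (a :: l) y = if a = y then ∅ else insert a (pre l y) := by
  unfold pre
  by_cases h : a = y <;> simp [h]

theorem notMem_pre_self (σ : List V) (y : V) : y ∉ pre σ y := by
  induction σ with
  | nil => simp [pre]
  | cons a l ih =>
    rw [pre_cons]
    split_ifs with h
    · simp
    · simp [Ne.symm h, ih]

theorem pre_append_cons {l₁ : List V} (l₂ : List V) {v : V} (h : v ∉ l₁) :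
    pre (l₁ ++ v :: l₂) v = l₁.toFinset := by
  induction l₁ with
  | nil => simp [pre_cons]
  | cons a l ih =>
    rw [List.mem_cons, not_or] at h
    rw [List.cons_append, pre_cons, if_neg (Ne.symm h.1), ih h.2, List.toFinset_cons]

theorem idxOf_lt_idxOf_of_mem_pre {σ : List V} {x y : V} (h : x ∈ pre σ y) :
    σ.idxOf x < σ.idxOf y := by
  induction σ with
  | nil => simp [pre] at h
  | cons a l ih =>
    rw [pre_cons] at h
    split_ifs at h with hay
    · simp at h
    rw [List.idxOf_cons_ne l hay]
    by_cases hax : a = x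
    · rw [List.idxOf_cons_eq l hax]
      exact Nat.succ_pos _
    · rw [List.idxOf_cons_ne l hax]
      exact Nat.succ_lt_succ (ih ((Finset.mem_insert.1 h).resolve_left (Ne.symm hax)))

theorem notMem_pre_of_mem_pre {σ : List V} {x y : V} (h : x ∈ pre σ y) : y ∉ pre σ x :=
  fun h' => (idxOf_lt_idxOf_of_mem_pre h).not_gt (idxOf_lt_idxOf_of_mem_pre h')

theorem pre_subset_pre_of_mem_pre {σ : List V} {x y : V} (h : x ∈ pre σ y) :
    pre σ x ⊆ pre σ y := by
  induction σ with
  | nil => simp [pre] at h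
  | cons a l ih =>
    rw [pre_cons] at h
    split_ifs at h with hay
    · simp at h
    rw [pre_cons, pre_cons, if_neg hay]
    split_ifs with hax
    · exact Finset.empty_subset _
    · exact Finset.insert_subset_insert a (ih ((Finset.mem_insert.1 h).resolve_left (Ne.symm hax)))

theorem mem_parents {E : EdgeSet V} {x v : V} : x ∈ parents E v ↔ (x, v) ∈ E := by
  simp [parents]

theorem CausalOrder.of_forall_mem_pre {E : EdgeSet V} {σ : List V} (hσ : IsPermList σ)
    (h : ∀ x y, (x, y) ∈ E → x ∈ pre σ y) : CausalOrder E σ := by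
  refine ⟨hσ, fun a b hab => ?_⟩
  induction hab with
  | single hab => exact idxOf_lt_idxOf_of_mem_pre (h _ _ hab)
  | tail _ hbc ih => exact ih.trans (idxOf_lt_idxOf_of_mem_pre (h _ _ hbc))

theorem CausalOrder.asymm {E : EdgeSet V} {σ : List V} (h : CausalOrder E σ) ⦃x y : V⦄
    (hxy : (x, y) ∈ E) : (y, x) ∉ E := fun hyx =>
  (h.2 _ _ (.single hxy)).not_gt (h.2 _ _ (.single hyx))

theorem CoveredEdge.mem_iff {E : EdgeSet V} {j k : V} (h : CoveredEdge E j k) {x : V} :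
    (x, k) ∈ E ↔ x = j ∨ (x, j) ∈ E := by
  rw [← mem_parents, ← mem_parents, h.2, Finset.mem_erase]
  have := mem_parents.2 h.1
  by_cases hx : x = j <;> simp [hx, this]

end Precedence

section Graphoid

variable {I : IndepModel V}

omit [Fintype V]

theorem Semigraphoid.indep_of_subset (hI : Semigraphoid I) {A B C S W : Finset V}
    (h : I A B C) (hSW : S ∪ W ⊆ B) : I A S (C ∪ W) := by
  rw [← Finset.union_sdiff_of_subset hSW] at h
  exact hI.weakUnion _ _ _ _ (hI.decomposition _ _ _ _ h).1

theorem Graphoid.indep_of_forall_singleton (hI : Graphoid I) {A N P : Finset V}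
    (hNP : N ⊆ P) (hN : N.Nonempty) (h : ∀ d ∈ N, I A {d} (P \ {d})) : I A N (P \ N) := by
  induction hN using Finset.Nonempty.cons_induction with
  | singleton d => exact h d (Finset.mem_singleton_self d)
  | cons d s hds hs ih =>
    rw [Finset.cons_eq_insert] at hNP h ⊢
    have hdP : d ∈ P := hNP (Finset.mem_insert_self d s)
    have hs := ih ((Finset.subset_insert d s).trans hNP)
      (fun x hx => h x (Finset.mem_insert_of_mem hx))
    have hd := h d (Finset.mem_insert_self d s)
    have e₁ : P \ insert d s ∪ {d} = P \ s := by ext x; simp; grind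
    have e₂ : P \ insert d s ∪ s = P \ {d} := by ext x; have := @hNP x; simp at this ⊢; grind
    have := hI.intersection A s {d} (P \ insert d s) (e₁ ▸ hs) (e₂ ▸ hd)
    rwa [Finset.union_comm, ← Finset.insert_eq] at this

end Graphoid

section RaskuttiUhler

variable {I : IndepModel V} {σ τ : List V}

theorem mem_RUedges {x y : V} :
    (x, y) ∈ RUedges I σ ↔ x ∈ pre σ y ∧ ¬ I {x} {y} ((pre σ y).erase x) := by
  simp [RUedges]

theorem causalOrder_RUedges (hσ : IsPermList σ) : CausalOrder (RUedges I σ) σ :=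
  .of_forall_mem_pre hσ fun _ _ h => (mem_RUedges.1 h).1

theorem parents_RUedges_subset_pre (y : V) : parents (RUedges I σ) y ⊆ pre σ y :=
  fun _ hx => (mem_RUedges.1 (mem_parents.1 hx)).1

/-- The local Markov property of `G_σ` at `y`: intersection assembles it from the non-edges. -/
theorem indep_of_parents_subset (hI : Graphoid I) {y : V} {S T : Finset V} (hS : S.Nonempty)
    (hST : Disjoint S T) (hpa : parents (RUedges I σ) y ⊆ T) (hsub : S ∪ T ⊆ pre σ y) :
    I {y} S T := by
  set Pa := parents (RUedges I σ) y
  have hnon : ∀ d ∈ pre σ y \ Pa, I {y} {d} (pre σ y \ {d}) := by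
    intro d hd
    rw [Finset.mem_sdiff, mem_parents, mem_RUedges, not_and, not_not] at hd
    rw [← Finset.erase_eq]
    exact hI.symm _ _ _ (hd.2 hd.1)
  have hSN : S ⊆ pre σ y \ Pa := fun x hx =>
    Finset.mem_sdiff.2 ⟨hsub (Finset.mem_union_left T hx),
      fun h => Finset.disjoint_left.1 hST hx (hpa h)⟩
  have hblanket := hI.indep_of_forall_singleton Finset.sdiff_subset (hS.mono hSN) hnon
  rw [Finset.sdiff_sdiff_eq_self (parents_RUedges_subset_pre y)] at hblanket
  have := hI.toSemigraphoid.indep_of_subset (S := S) (W := T \ Pa) hblanket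
    (Finset.union_subset hSN (Finset.sdiff_subset_sdiff (Finset.subset_union_right.trans hsub)
      le_rfl))
  rwa [Finset.union_sdiff_of_subset hpa] at this

theorem mem_RUedges_of_pre_eq_insert (hI : Semigraphoid I) {x y k : V} (hk : k ∉ pre σ y)
    (hpre : pre τ y = insert k (pre σ y)) (hind : I {y} {k} (pre σ y))
    (h : (x, y) ∈ RUedges I τ) : (x, y) ∈ RUedges I σ := by
  rw [mem_RUedges, hpre] at h
  obtain ⟨hx, hdep⟩ := h
  by_cases hxk : x = k
  · subst hxk
    rw [Finset.erase_insert hk] at hdep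
    exact absurd (hI.symm _ _ _ hind) hdep
  have hxσ : x ∈ pre σ y := (Finset.mem_insert.1 hx).resolve_left hxk
  refine mem_RUedges.2 ⟨hxσ, fun hxy => hdep ?_⟩
  have hpair := hI.contraction {y} {x} {k} ((pre σ y).erase x) (hI.symm _ _ _ hxy)
    (by rwa [Finset.union_comm, ← Finset.insert_eq, Finset.insert_erase hxσ])
  have := hI.symm _ _ _ (hI.weakUnion _ _ _ _ hpair)
  rwa [Finset.union_comm, ← Finset.insert_eq, ← Finset.erase_insert_of_ne (Ne.symm hxk)] at this

variable {j k x : V}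

theorem CoveredEdge.indep_of_notMem_parents (hI : Graphoid I)
    (hcov : CoveredEdge (RUedges I σ) j k) (hx : x ∈ pre σ j) (hxj : (x, j) ∉ RUedges I σ) :
    I {x} ({j} ∪ {k}) ((pre σ j).erase x) := by
  set D := pre σ j
  set Pa := parents (RUedges I σ) j
  have hjk : j ∈ pre σ k := (mem_RUedges.1 hcov.1).1
  have hDk : D ⊆ pre σ k := pre_subset_pre_of_mem_pre hjk
  have hPaD : Pa ⊆ D := parents_RUedges_subset_pre j
  have hxS : x ∈ D \ Pa := Finset.mem_sdiff.2 ⟨hx, mt mem_parents.1 hxj⟩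
  have hparK : parents (RUedges I σ) k = insert j Pa := by
    ext z
    rw [mem_parents, hcov.mem_iff, Finset.mem_insert, mem_parents]
  have hj : I {j} (D \ Pa) Pa := indep_of_parents_subset hI ⟨x, hxS⟩ Finset.sdiff_disjoint
    le_rfl (Finset.union_subset Finset.sdiff_subset hPaD)
  have hk : I {k} (D \ Pa) (insert j Pa) := by
    refine indep_of_parents_subset hI ⟨x, hxS⟩ ?_ hparK.le
      (Finset.union_subset (Finset.sdiff_subset.trans hDk)
        (Finset.insert_subset hjk (hPaD.trans hDk)))
    rw [Finset.disjoint_insert_right]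
    exact ⟨fun h => notMem_pre_self σ j (Finset.sdiff_subset h), Finset.sdiff_disjoint⟩
  have hpair : I (D \ Pa) ({j} ∪ {k}) Pa := hI.contraction _ _ _ _ (hI.symm _ _ _ hj)
    (by rw [Finset.union_comm, ← Finset.insert_eq]; exact hI.symm _ _ _ hk)
  rw [← Finset.insert_erase hxS, Finset.insert_eq] at hpair
  have := hI.symm _ _ _ (hI.weakUnion _ _ _ _ (hI.symm _ _ _ hpair))
  have hD : Pa ∪ (D \ Pa).erase x = D.erase x := by
    ext z
    have := @hPaD z
    simp only [Finset.mem_union, Finset.mem_erase, Finset.mem_sdiff]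
    grind
  rwa [hD] at this

theorem CoveredEdge.eq_or_mem_of_pre_tail (hI : Graphoid I)
    (hcov : CoveredEdge (RUedges I σ) j k) (hpre : pre τ j = insert k (pre σ j))
    (h : (x, j) ∈ RUedges I τ) : x = k ∨ (x, j) ∈ RUedges I σ := by
  rw [mem_RUedges, hpre] at h
  by_cases hxk : x = k
  · exact .inl hxk
  refine .inr (by_contra fun hxj => h.2 ?_)
  have hxσ := (Finset.mem_insert.1 h.1).resolve_left hxk
  have := hI.weakUnion _ _ _ _ (hcov.indep_of_notMem_parents hI hxσ hxj)
  rwa [Finset.erase_insert_of_ne (Ne.symm hxk), Finset.insert_eq, Finset.union_comm]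

theorem CoveredEdge.mem_of_pre_head (hI : Graphoid I)
    (hcov : CoveredEdge (RUedges I σ) j k) (hpre : pre τ k = pre σ j)
    (h : (x, k) ∈ RUedges I τ) : (x, j) ∈ RUedges I σ := by
  rw [mem_RUedges, hpre] at h
  by_contra hxj
  exact h.2 (hI.decomposition _ _ _ _ (hcov.indep_of_notMem_parents hI h.1 hxj)).2

theorem CoveredEdge.indep_head_of_between (hI : Graphoid I)
    (hcov : CoveredEdge (RUedges I σ) j k) {y : V} (hjy : j ∈ pre σ y) (hyk : y ∈ pre σ k) :
    I {k} {y} (pre σ y) := by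
  refine indep_of_parents_subset hI (Finset.singleton_nonempty y)
    (Finset.disjoint_singleton_left.2 (notMem_pre_self σ y)) (fun z hz => ?_)
    (Finset.union_subset (Finset.singleton_subset_iff.2 hyk) (pre_subset_pre_of_mem_pre hyk))
  rcases hcov.mem_iff.1 (mem_parents.1 hz) with rfl | hzj
  · exact hjy
  · exact pre_subset_pre_of_mem_pre hjy (mem_RUedges.1 hzj).1

end RaskuttiUhler

section Tuck

variable {δ₁ δ₂ δ₃ : List V} {j k y : V}

omit [Fintype V]

theorem List.Nodup.notMem_of_append_cons {α : Type*} {l₁ l₂ : List α} {a : α}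
    (h : (l₁ ++ a :: l₂).Nodup) : a ∉ l₁ :=
  fun ha => (List.nodup_cons.1 (List.nodup_middle.1 h)).1 (List.mem_append_left l₂ ha)

theorem pre_of_nodup {l₁ l₂ : List V} (h : (l₁ ++ y :: l₂).Nodup) :
    pre (l₁ ++ y :: l₂) y = l₁.toFinset :=
  pre_append_cons l₂ h.notMem_of_append_cons

theorem List.perm_tuck {α : Type*} (δ₁ δ₂ δ₃ : List α) (j k : α) :
    (δ₁ ++ j :: (δ₂ ++ k :: δ₃)).Perm (δ₁ ++ k :: j :: (δ₂ ++ δ₃)) :=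
  .append_left δ₁ ((List.perm_middle.cons j).trans (.swap k j _))

theorem pre_tuck_head (hnd : (δ₁ ++ j :: (δ₂ ++ k :: δ₃)).Nodup) :
    pre (δ₁ ++ k :: j :: (δ₂ ++ δ₃)) k = pre (δ₁ ++ j :: (δ₂ ++ k :: δ₃)) j := by
  rw [pre_of_nodup hnd, pre_of_nodup ((List.perm_tuck _ _ _ _ _).nodup_iff.1 hnd)]

theorem pre_tuck_tail (hnd : (δ₁ ++ j :: (δ₂ ++ k :: δ₃)).Nodup) :
    pre (δ₁ ++ k :: j :: (δ₂ ++ δ₃)) j = insert k (pre (δ₁ ++ j :: (δ₂ ++ k :: δ₃)) j) := by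
  have hτ := (List.perm_tuck _ _ _ _ _).nodup_iff.1 hnd
  rw [show δ₁ ++ k :: j :: (δ₂ ++ δ₃) = (δ₁ ++ [k]) ++ j :: (δ₂ ++ δ₃) by simp] at hτ ⊢
  rw [pre_of_nodup hnd, pre_of_nodup hτ]
  ext; simp

theorem pre_tuck_of_mem_mid (hnd : (δ₁ ++ j :: (δ₂ ++ k :: δ₃)).Nodup) (hy : y ∈ δ₂) :
    j ∈ pre (δ₁ ++ j :: (δ₂ ++ k :: δ₃)) y ∧ y ∈ pre (δ₁ ++ j :: (δ₂ ++ k :: δ₃)) k ∧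
      pre (δ₁ ++ k :: j :: (δ₂ ++ δ₃)) y = insert k (pre (δ₁ ++ j :: (δ₂ ++ k :: δ₃)) y) := by
  have hτ := (List.perm_tuck _ _ _ _ _).nodup_iff.1 hnd
  have hk : y ∈ pre (δ₁ ++ j :: (δ₂ ++ k :: δ₃)) k := by
    rw [show δ₁ ++ j :: (δ₂ ++ k :: δ₃) = (δ₁ ++ j :: δ₂) ++ k :: δ₃ by simp,
      pre_of_nodup (by simpa using hnd)]
    simp [hy]
  obtain ⟨s, t, rfl⟩ := List.append_of_mem hy
  rw [show δ₁ ++ j :: (s ++ y :: t ++ k :: δ₃) = (δ₁ ++ j :: s) ++ y :: (t ++ k :: δ₃) by simp]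
    at hnd hk ⊢
  rw [show δ₁ ++ k :: j :: (s ++ y :: t ++ δ₃) = (δ₁ ++ k :: j :: s) ++ y :: (t ++ δ₃) by simp]
    at hτ ⊢
  rw [pre_of_nodup hnd, pre_of_nodup hτ]
  refine ⟨by simp, hk, ?_⟩
  ext; simp

theorem pre_tuck_of_mem_outer (hnd : (δ₁ ++ j :: (δ₂ ++ k :: δ₃)).Nodup) (hy : y ∈ δ₁ ∨ y ∈ δ₃) :
    pre (δ₁ ++ k :: j :: (δ₂ ++ δ₃)) y = pre (δ₁ ++ j :: (δ₂ ++ k :: δ₃)) y := by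
  have hτ := (List.perm_tuck _ _ _ _ _).nodup_iff.1 hnd
  rcases hy with hy | hy <;> obtain ⟨s, t, rfl⟩ := List.append_of_mem hy
  · rw [show s ++ y :: t ++ j :: (δ₂ ++ k :: δ₃) = s ++ y :: (t ++ j :: (δ₂ ++ k :: δ₃)) by simp]
      at hnd ⊢
    rw [show s ++ y :: t ++ k :: j :: (δ₂ ++ δ₃) = s ++ y :: (t ++ k :: j :: (δ₂ ++ δ₃)) by simp]
      at hτ ⊢
    rw [pre_of_nodup hnd, pre_of_nodup hτ]
  · rw [show δ₁ ++ j :: (δ₂ ++ k :: (s ++ y :: t)) = (δ₁ ++ j :: (δ₂ ++ k :: s)) ++ y :: t by simp]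
      at hnd ⊢
    rw [show δ₁ ++ k :: j :: (δ₂ ++ (s ++ y :: t)) = (δ₁ ++ k :: j :: (δ₂ ++ s)) ++ y :: t by simp]
      at hτ ⊢
    rw [pre_of_nodup hnd, pre_of_nodup hτ]
    ext; simp; tauto

omit [DecidableEq V] in
theorem IsPermList.tuck (hperm : IsPermList (δ₁ ++ j :: (δ₂ ++ k :: δ₃))) :
    IsPermList (δ₁ ++ k :: j :: (δ₂ ++ δ₃)) :=
  ⟨(List.perm_tuck _ _ _ _ _).nodup_iff.1 hperm.1,
    fun v => (List.perm_tuck _ _ _ _ _).mem_iff.1 (hperm.2 v)⟩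

omit [DecidableEq V] in
theorem IsPermList.mem_tuck_cases (hperm : IsPermList (δ₁ ++ j :: (δ₂ ++ k :: δ₃))) (y : V) :
    y ∈ δ₁ ∨ y = j ∨ y ∈ δ₂ ∨ y = k ∨ y ∈ δ₃ := by
  simpa using hperm.2 y

end Tuck

theorem Finset.card_insert_swap_erase {α : Type*} [DecidableEq α] {s : Finset (α × α)} {a b : α}
    (hab : (a, b) ∈ s) (hba : (b, a) ∉ s) : (insert (b, a) (s.erase (a, b))).card = s.card := by
  rw [Finset.card_insert_of_notMem (fun h => hba (Finset.mem_of_mem_erase h)),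
    Finset.card_erase_add_one hab]

section TuckGraph

variable {I : IndepModel V} {δ₁ δ₂ δ₃ : List V} {j k : V}

theorem causalOrder_reverse_tuck (hperm : IsPermList (δ₁ ++ j :: (δ₂ ++ k :: δ₃)))
    (hcov : CoveredEdge (RUedges I (δ₁ ++ j :: (δ₂ ++ k :: δ₃))) j k) :
    CausalOrder (insert (k, j) ((RUedges I (δ₁ ++ j :: (δ₂ ++ k :: δ₃))).erase (j, k)))
      (δ₁ ++ k :: j :: (δ₂ ++ δ₃)) := by
  refine .of_forall_mem_pre hperm.tuck fun x y h => ?_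
  rcases Finset.mem_insert.1 h with he | he
  · obtain ⟨rfl, rfl⟩ := Prod.ext_iff.1 he
    rw [pre_tuck_tail hperm.1]
    exact Finset.mem_insert_self _ _
  obtain ⟨hne, hE⟩ := Finset.mem_erase.1 he
  have hx := (mem_RUedges.1 hE).1
  rcases hperm.mem_tuck_cases y with hy | rfl | hy | rfl | hy
  · rwa [pre_tuck_of_mem_outer hperm.1 (.inl hy)]
  · rw [pre_tuck_tail hperm.1]
    exact Finset.mem_insert_of_mem hx
  · rw [(pre_tuck_of_mem_mid hperm.1 hy).2.2]
    exact Finset.mem_insert_of_mem hx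
  · have hxj := (hcov.mem_iff.1 hE).resolve_left fun hxj => hne (by rw [hxj])
    rw [pre_tuck_head hperm.1]
    exact (mem_RUedges.1 hxj).1
  · rwa [pre_tuck_of_mem_outer hperm.1 (.inr hy)]

theorem RUedges_tuck_subset (hI : Graphoid I) (hperm : IsPermList (δ₁ ++ j :: (δ₂ ++ k :: δ₃)))
    (hcov : CoveredEdge (RUedges I (δ₁ ++ j :: (δ₂ ++ k :: δ₃))) j k) :
    RUedges I (δ₁ ++ k :: j :: (δ₂ ++ δ₃)) ⊆
      insert (k, j) ((RUedges I (δ₁ ++ j :: (δ₂ ++ k :: δ₃))).erase (j, k)) := by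
  rintro ⟨x, y⟩ h
  have hjk : (j, k) ∉ RUedges I (δ₁ ++ k :: j :: (δ₂ ++ δ₃)) := fun h' =>
    notMem_pre_self _ j (pre_tuck_head hperm.1 ▸ (mem_RUedges.1 h').1)
  refine Finset.mem_insert.2 (or_iff_not_imp_left.2 fun hkj =>
    Finset.mem_erase.2 ⟨fun he => hjk (he ▸ h), ?_⟩)
  rcases hperm.mem_tuck_cases y with hy | rfl | hy | rfl | hy
  · rwa [mem_RUedges, pre_tuck_of_mem_outer hperm.1 (.inl hy), ← mem_RUedges] at h
  · exact (hcov.eq_or_mem_of_pre_tail hI (pre_tuck_tail hperm.1) h).resolve_left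
      fun hx => hkj (by rw [hx])
  · obtain ⟨hjy, hyk, hpre⟩ := pre_tuck_of_mem_mid hperm.1 hy
    exact mem_RUedges_of_pre_eq_insert hI.toSemigraphoid (notMem_pre_of_mem_pre hyk) hpre
      (hI.symm _ _ _ (hcov.indep_head_of_between hI hjy hyk)) h
  · exact hcov.mem_iff.2 (.inr (hcov.mem_of_pre_head hI (pre_tuck_head hperm.1) h))
  · rwa [mem_RUedges, pre_tuck_of_mem_outer hperm.1 (.inr hy), ← mem_RUedges] at h

end TuckGraph

section ActiveTrails

omit [Fintype V] [DecidableEq V]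

variable {G H E : EdgeSet V} {C : Finset V} {col col' : V → Prop} {a b j k u v x : V}

def AncestorOf (G : EdgeSet V) (C : Finset V) (v : V) : Prop :=
  ∃ d ∈ C, Relation.ReflTransGen (Adj G) v d

theorem AncestorOf.mono (hGH : G ⊆ H) (h : AncestorOf G C v) : AncestorOf H C v :=
  let ⟨d, hd, hvd⟩ := h
  ⟨d, hd, Relation.ReflTransGen.mono (fun _ _ hxy => hGH hxy) _ _ hvd⟩

def Enters (G : EdgeSet V) (u v : V) : Bool → Prop
  | true => (u, v) ∈ G
  | false => (v, u) ∈ G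

/-- `ActiveTrail G C col b v m`: an active trail continues from `v` to `b`, where `v` was entered
along an edge pointing into it (`m = true`) or out of it (`m = false`); a collider `v` passes
when `col v`. -/
inductive ActiveTrail (G : EdgeSet V) (C : Finset V) (col : V → Prop) (b : V) : V → Bool → Prop
  | nil (m : Bool) : ActiveTrail G C col b b m
  | fwd {v w : V} (m : Bool) (hvw : (v, w) ∈ G) (hv : v ∉ C) (h : ActiveTrail G C col b w true) :
      ActiveTrail G C col b v m
  | back {v w : V} (hwv : (w, v) ∈ G) (hv : v ∉ C) (h : ActiveTrail G C col b w false) :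
      ActiveTrail G C col b v false
  | collider {v w : V} (hwv : (w, v) ∈ G) (hv : col v) (h : ActiveTrail G C col b w false) :
      ActiveTrail G C col b v true

def ActiveTriples (G : EdgeSet V) (C : Finset V) : List V → Prop
  | x :: y :: z :: l => ActiveTriple G C x y z ∧ ActiveTriples G C (y :: z :: l)
  | _ => True

theorem activeTriples_iff : ∀ {l : List V}, ActiveTriples G C l ↔
    ∀ (i : ℕ) (h : i + 2 < l.length), ActiveTriple G C l[i] l[i + 1] l[i + 2]
  | [] | [_] | [_, _] => by simp [ActiveTriples]
  | x :: y :: z :: l => by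
    rw [ActiveTriples, activeTriples_iff]
    constructor
    · rintro ⟨h₀, h⟩ (_ | i) hi
      exacts [h₀, h i (by simp at hi ⊢; omega)]
    · intro h
      exact ⟨h 0 (by simp), fun i hi => h (i + 1) (by simp at hi ⊢; omega)⟩

theorem dConn_iff : DConn G C a b ↔
    ∃ w l, (a :: w :: l).IsChain (fun x y => Adj G x y ∨ Adj G y x) ∧
      ActiveTriples G C (a :: w :: l) ∧ (w :: l).getLast? = some b := by
  simp only [DConn, List.get_eq_getElem, ← activeTriples_iff,
    ← List.isChain_iff_getElem (R := fun x y => Adj G x y ∨ Adj G y x)]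
  constructor
  · rintro ⟨_ | ⟨a', _ | ⟨w, l⟩⟩, hlen, hhead, hlast, hchain, htrip⟩
    · simp at hlen
    · simp at hlen
    · obtain rfl : a' = a := by simpa using hhead
      exact ⟨w, l, hchain, htrip, by simpa using hlast⟩
  · rintro ⟨w, l, hchain, htrip, hlast⟩
    exact ⟨a :: w :: l, by simp, rfl, by simpa using hlast, hchain, htrip⟩

theorem ActiveTriple.notMem_of_out (hasymm : ∀ ⦃x y⦄, (x, y) ∈ G → (y, x) ∉ G)
    (hxv : (v, x) ∈ G) (h : ActiveTriple G C u v x) : v ∉ C := by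
  rcases h with ⟨⟨_, hxv'⟩, _⟩ | ⟨_, hv⟩
  exacts [absurd hxv' (hasymm hxv), hv]

theorem ActiveTriple.of_enters_true (hxv : (x, v) ∈ G) (huv : Enters G u v true)
    (h : ActiveTriple G C u v x) : AncestorOf G C v := by
  rcases h with ⟨_, hanc⟩ | ⟨hnc, _⟩
  exacts [hanc, absurd ⟨huv, hxv⟩ hnc]

theorem ActiveTriple.notMem_of_enters_false (hasymm : ∀ ⦃x y⦄, (x, y) ∈ G → (y, x) ∉ G)
    (huv : Enters G u v false) (h : ActiveTriple G C u v x) : v ∉ C := by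
  rcases h with ⟨⟨huv', _⟩, _⟩ | ⟨_, hv⟩
  exacts [absurd huv' (hasymm huv), hv]

theorem activeTrail_of_walk (hasymm : ∀ ⦃x y⦄, (x, y) ∈ G → (y, x) ∉ G) :
    ∀ (l : List V) {u v : V} {m : Bool}, Enters G u v m →
      (v :: l).IsChain (fun x y => Adj G x y ∨ Adj G y x) → ActiveTriples G C (u :: v :: l) →
      (v :: l).getLast? = some b → ActiveTrail G C (AncestorOf G C) b v m
  | [], _, _, _, _, _, _, hlast => by
    obtain rfl : _ = b := by simpa using hlast
    exact .nil _
  | x :: l, u, v, m, huv, hchain, ⟨htrip, htrips⟩, hlast => by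
    rw [List.isChain_cons_cons] at hchain
    rw [List.getLast?_cons_cons] at hlast
    rcases hchain.1 with hvx | hxv
    · exact .fwd m hvx (htrip.notMem_of_out hasymm hvx)
        (activeTrail_of_walk hasymm l hvx hchain.2 htrips hlast)
    · have hx := activeTrail_of_walk hasymm l (m := false) hxv hchain.2 htrips hlast
      cases m
      · exact .back hxv (htrip.notMem_of_enters_false hasymm huv) hx
      · exact .collider hxv (htrip.of_enters_true hxv huv) hx

theorem activeTrail_of_dConn (hasymm : ∀ ⦃x y⦄, (x, y) ∈ G → (y, x) ∉ G) (ha : a ∉ C)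
    (h : DConn G C a b) : ActiveTrail G C (AncestorOf G C) b a false := by
  obtain ⟨w, l, hchain, htrip, hlast⟩ := dConn_iff.1 h
  rw [List.isChain_cons_cons] at hchain
  rcases hchain.1 with haw | hwa
  · exact .fwd false haw ha (activeTrail_of_walk hasymm l haw hchain.2 htrip hlast)
  · exact .back hwa ha (activeTrail_of_walk hasymm l (m := false) hwa hchain.2 htrip hlast)

theorem walk_of_activeTrail (hasymm : ∀ ⦃x y⦄, (x, y) ∈ G → (y, x) ∉ G) {m : Bool}
    (h : ActiveTrail G C (· ∈ C) b v m) :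
    ∃ l, (v :: l).IsChain (fun x y => Adj G x y ∨ Adj G y x) ∧
      (∀ u, Enters G u v m → ActiveTriples G C (u :: v :: l)) ∧ (v :: l).getLast? = some b := by
  induction h with
  | nil m => exact ⟨[], .singleton _, fun _ _ => trivial, rfl⟩
  | @fwd v w m hvw hv _ ih =>
    obtain ⟨l, hchain, htrips, hlast⟩ := ih
    exact ⟨w :: l, .cons_cons (.inl hvw) hchain,
      fun u _ => ⟨.inr ⟨fun hcol => hasymm hvw hcol.2, hv⟩, htrips v hvw⟩, by simpa using hlast⟩
  | @back v w hwv hv _ ih =>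
    obtain ⟨l, hchain, htrips, hlast⟩ := ih
    exact ⟨w :: l, .cons_cons (.inr hwv) hchain,
      fun u huv => ⟨.inr ⟨fun hcol => hasymm huv hcol.1, hv⟩, htrips v hwv⟩, by simpa using hlast⟩
  | @collider v w hwv hv _ ih =>
    obtain ⟨l, hchain, htrips, hlast⟩ := ih
    exact ⟨w :: l, .cons_cons (.inr hwv) hchain,
      fun u huv => ⟨.inl ⟨⟨huv, hwv⟩, v, hv, .refl⟩, htrips v hwv⟩, by simpa using hlast⟩

theorem dConn_of_activeTrail (hasymm : ∀ ⦃x y⦄, (x, y) ∈ G → (y, x) ∉ G) (hab : a ≠ b)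
    {m : Bool} (h : ActiveTrail G C (· ∈ C) b a m) : DConn G C a b := by
  cases h with
  | nil => exact absurd rfl hab
  | @fwd _ w _ haw _ h =>
    obtain ⟨l, hchain, htrips, hlast⟩ := walk_of_activeTrail hasymm h
    exact dConn_iff.2 ⟨w, l, .cons_cons (.inl haw) hchain, htrips a haw, hlast⟩
  | @back _ w hwa _ h | @collider _ w hwa _ h =>
    obtain ⟨l, hchain, htrips, hlast⟩ := walk_of_activeTrail hasymm h
    exact dConn_iff.2 ⟨w, l, .cons_cons (.inr hwa) hchain, htrips a hwa, hlast⟩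

theorem ActiveTrail.mono (hGH : G ⊆ H) (hcol : ∀ v, col v → col' v) {m : Bool}
    (h : ActiveTrail G C col b v m) : ActiveTrail H C col' b v m := by
  induction h with
  | nil m => exact .nil m
  | fwd m hvw hv _ ih => exact .fwd m (hGH hvw) hv ih
  | back hwv hv _ ih => exact .back (hGH hwv) hv ih
  | collider hwv hv _ ih => exact .collider (hGH hwv) (hcol _ hv) ih

theorem ActiveTrail.true_of_false_of_mem (hv : v ∈ C) (h : ActiveTrail G C col b v false) :
    ActiveTrail G C col b v true := by
  cases h with
  | nil => exact .nil true
  | fwd _ _ hv' _ | back _ hv' _ => exact absurd hv hv'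

theorem ActiveTrail.false_of_true_of_notMem (hv : v ∉ C) (h : ActiveTrail G C (· ∈ C) b v true) :
    ActiveTrail G C (· ∈ C) b v false := by
  cases h with
  | nil => exact .nil false
  | fwd _ hvw hv' h => exact .fwd false hvw hv' h
  | collider _ hv' _ => exact absurd hv' hv

/-- A collider with a descendant `d ∈ C` can be passed by walking down to `d` and back. -/
theorem ActiveTrail.true_of_false_of_ancestor {d : V} (hd : d ∈ C)
    (hvd : Relation.ReflTransGen (Adj G) v d) (h : ActiveTrail G C (· ∈ C) b v false) :
    ActiveTrail G C (· ∈ C) b v true := by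
  induction hvd using Relation.ReflTransGen.head_induction_on with
  | refl => exact h.true_of_false_of_mem hd
  | @head v w hvw _ ih =>
    by_cases hv : v ∈ C
    · exact h.true_of_false_of_mem hv
    by_cases hw : w ∈ C
    · exact .fwd true hvw hv (.collider hvw hw h)
    · exact .fwd true hvw hv (ih (.back hvw hw h))

theorem ActiveTrail.of_ancestorOf {m : Bool} (h : ActiveTrail G C (AncestorOf G C) b v m) :
    ActiveTrail G C (· ∈ C) b v m := by
  induction h with
  | nil m => exact .nil m
  | fwd m hvw hv _ ih => exact .fwd m hvw hv ih
  | back hwv hv _ ih => exact .back hwv hv ih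
  | @collider v w hwv hv _ ih =>
    obtain ⟨d, hd, hvd⟩ := hv
    by_cases hvC : v ∈ C
    · exact .collider hwv hvC ih
    · exact true_of_false_of_ancestor hd hvd (.back hwv hvC ih)

end ActiveTrails

section CoveredReversal

omit [Fintype V]

variable {E G : EdgeSet V} {C : Finset V} {b j k : V}

theorem ActiveTrail.head_false_of_tail_true (hcov : CoveredEdge E j k) (hk : k ∉ C)
    (h : ActiveTrail E C (· ∈ C) b j true) : ActiveTrail E C (· ∈ C) b k false := by
  cases h with
  | nil => exact .back hcov.1 hk (.nil false)
  | fwd _ hjw hj h => exact .back hcov.1 hk (.fwd false hjw hj h)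
  | collider hwj _ h => exact .back (hcov.mem_iff.2 (.inr hwj)) hk h

theorem ActiveTrail.tail_false_of_head_false (hcov : CoveredEdge E j k) (hj : j ∉ C)
    (h : ActiveTrail E C (· ∈ C) b k false) : ActiveTrail E C (· ∈ C) b j false := by
  cases h with
  | nil => exact .fwd false hcov.1 hj (.nil true)
  | fwd _ hkw hk h => exact .fwd false hcov.1 hj (.fwd true hkw hk h)
  | back hwk _ h =>
    rcases hcov.mem_iff.1 hwk with rfl | hwj
    exacts [h, .back hwj hj h]

theorem ActiveTrail.tail_or_head_true_of_head_false (hcov : CoveredEdge E j k) (hj : j ∈ C)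
    (h : ActiveTrail E C (· ∈ C) b k false) :
    ActiveTrail E C (· ∈ C) b j true ∨ ActiveTrail E C (· ∈ C) b k true := by
  cases h with
  | nil => exact .inr (.nil true)
  | fwd _ hkw hk h => exact .inr (.fwd true hkw hk h)
  | back hwk _ h =>
    rcases hcov.mem_iff.1 hwk with rfl | hwj
    exacts [.inl (h.true_of_false_of_mem hj), .inl (.collider hwj hj h)]

theorem ActiveTrail.of_reverse_covered (hcov : CoveredEdge E j k) {v : V} {m : Bool}
    (h : ActiveTrail (insert (k, j) (E.erase (j, k))) C (· ∈ C) b v m) :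
    ActiveTrail E C (· ∈ C) b v m ∨ m = true ∧ (v = j ∨ v = k) ∧
      (ActiveTrail E C (· ∈ C) b j true ∨ ActiveTrail E C (· ∈ C) b k true) := by
  induction h with
  | nil m => exact .inl (.nil m)
  | @fwd v w m hvw hv _ ih =>
    have hjk : w = j ∨ w = k →
        ActiveTrail E C (· ∈ C) b j true ∨ ActiveTrail E C (· ∈ C) b k true := by
      rintro (rfl | rfl)
      exacts [ih.elim .inl (·.2.2), ih.elim .inr (·.2.2)]
    rcases Finset.mem_insert.1 hvw with he | he
    · obtain ⟨rfl, rfl⟩ := Prod.ext_iff.1 he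
      cases m
      · exact .inl ((hjk (.inl rfl)).elim (·.head_false_of_tail_true hcov hv)
          (·.false_of_true_of_notMem hv))
      · exact .inr ⟨rfl, .inr rfl, hjk (.inl rfl)⟩
    obtain ⟨hne, hvwE⟩ := Finset.mem_erase.1 he
    by_cases hw : w = j ∨ w = k
    · have hvj : (v, j) ∈ E := by
        rcases hw with rfl | rfl
        exacts [hvwE, (hcov.mem_iff.1 hvwE).resolve_left fun hvj => hne (by rw [hvj])]
      exact .inl ((hjk hw).elim (.fwd m hvj hv) (.fwd m (hcov.mem_iff.2 (.inr hvj)) hv))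
    · exact .inl (.fwd m hvwE hv (ih.resolve_right fun h => hw h.2.1))
  | back hwv hv _ ih =>
    replace ih := ih.resolve_right (by simp)
    rcases Finset.mem_insert.1 hwv with he | he
    · obtain ⟨rfl, rfl⟩ := Prod.ext_iff.1 he
      exact .inl (ih.tail_false_of_head_false hcov hv)
    · exact .inl (.back (Finset.mem_erase.1 he).2 hv ih)
  | collider hwv hv _ ih =>
    replace ih := ih.resolve_right (by simp)
    rcases Finset.mem_insert.1 hwv with he | he
    · obtain ⟨rfl, rfl⟩ := Prod.ext_iff.1 he
      exact .inr ⟨rfl, .inl rfl, ih.tail_or_head_true_of_head_false hcov hv⟩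
    · exact .inl (.collider (Finset.mem_erase.1 he).2 hv ih)

theorem ISub.of_subset_reverse_covered (hE : ∀ ⦃x y⦄, (x, y) ∈ E → (y, x) ∉ E)
    (hG : ∀ ⦃x y⦄, (x, y) ∈ G → (y, x) ∉ G) (hcov : CoveredEdge E j k)
    (hsub : G ⊆ insert (k, j) (E.erase (j, k))) : ISub E G := by
  intro A B C hdisj hsep a ha b hb hconn
  have hab : a ≠ b := fun hab => Finset.disjoint_left.1 hdisj.1 ha (hab ▸ hb)
  have htrail := (activeTrail_of_dConn hG (Finset.disjoint_left.1 hdisj.2.1 ha) hconn).mono hsub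
    fun _ => AncestorOf.mono hsub
  exact hsep a ha b hb (dConn_of_activeTrail hE hab
    ((htrail.of_ancestorOf.of_reverse_covered hcov).resolve_right (by simp)))

end CoveredReversal

/-- for a covered edge `j → k` of `G_π`, with `H` the result of
reversing `j → k` and `τ = tuck(π, j, k)`: (a) `τ` is a causal order of `H`;
(b) `E(G_τ) ⊆ E(H)`; (c) `|E(G_τ)| ≤ |E(G_π)|`; (d) `I(G_π) ⊆ I(G_τ)`. -/
theorem tuck_lemma (I : IndepModel V) (hG : Graphoid I)
    (j k : V) (δ₁ δ₂ δ₃ : List V) (π τ : List V)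
    (hπ : π = δ₁ ++ j :: (δ₂ ++ k :: δ₃))
    (hτ : τ = δ₁ ++ k :: j :: (δ₂ ++ δ₃))
    (hperm : IsPermList π)
    (hcov : CoveredEdge (RUedges I π) j k)
    (H : EdgeSet V) (hH : H = insert (k, j) ((RUedges I π).erase (j, k))) :
    CausalOrder H τ ∧
    RUedges I τ ⊆ H ∧
    (RUedges I τ).card ≤ (RUedges I π).card ∧
    ISub (RUedges I π) (RUedges I τ) := by
  subst hπ hτ hH
  have hsub := RUedges_tuck_subset hG hperm hcov
  refine ⟨causalOrder_reverse_tuck hperm hcov, hsub, ?_, ?_⟩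
  · exact (Finset.card_le_card hsub).trans
      (Finset.card_insert_swap_erase hcov.1 ((causalOrder_RUedges hperm).asymm hcov.1)).le
  · exact .of_subset_reverse_covered (causalOrder_RUedges hperm).asymm
      (causalOrder_RUedges hperm.tuck).asymm hcov hsub
end

section
/- Let P be a graphoid over V and π a permutation. Consider π¹ = ⟨δ₁, j, k, δ₂⟩ and τ¹ = ⟨ζ₁, j, k, ζ₂⟩ with j immediately before k in both, and let π² = ⟨δ₁, k, j, δ₂⟩ and τ² = ⟨ζ₁, k, j, ζ₂⟩ be the results of swapping j and k. If the induced DAGs satisfy G_{π¹} = G_{τ¹}, then G_{π²} = G_{τ²}. -/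
open Classical
attribute [local instance] Classical.propDecidable

variable {V : Type} [Fintype V] [DecidableEq V]

/-!
Only the predecessor sets of `j` and `k` change under the swap. Let `S` be their common
predecessors, `pa` the RU parent sets before the swap, `M = (pa k \ {j}) ∪ pa j` and
`R = S \ M`. By intersection, pairwise independences glue into the local Markov property, so
`j ⫫ R | M` and `k ⫫ R | M ∪ {j}`, and contraction gives `R ⫫ {j, k} | M`. Thus `M` screens
`k` off from `S`, and `M ∪ {k}` screens `j` off from `S ∪ {k}`; RU parents computed inside such
a blanket are unchanged. Since `M` is built from the old parent sets alone, which agree for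
`π¹` and `τ¹`, the new parent sets agree as well.
-/

section RUParents

variable {α : Type} [DecidableEq α] {I : IndepModel α}

noncomputable def ruParents (I : IndepModel α) (S : Finset α) (v : α) : Finset α :=
  S.filter fun a => ¬ I {a} {v} (S.erase a)

theorem mem_ruParents {S : Finset α} {v a : α} :
    a ∈ ruParents I S v ↔ a ∈ S ∧ ¬ I {a} {v} (S.erase a) :=
  Finset.mem_filter

theorem ruParents_subset (S : Finset α) (v : α) : ruParents I S v ⊆ S :=
  Finset.filter_subset _ _

theorem Semigraphoid.symm_iff (hI : Semigraphoid I) {A B C : Finset α} : I A B C ↔ I B A C :=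
  ⟨hI.symm A B C, hI.symm B A C⟩

theorem Semigraphoid.ruParents_subset_of_indep (hI : Semigraphoid I) {S M : Finset α} {v : α}
    (hMS : M ⊆ S) (h : I {v} (S \ M) M) : ruParents I S v ⊆ M := by
  intro a ha
  obtain ⟨haS, hdep⟩ := mem_ruParents.1 ha
  by_contra haM
  have hsplit : {a} ∪ (S \ M).erase a = S \ M := by grind
  have hrest : M ∪ (S \ M).erase a = S.erase a := by grind
  have := hI.weakUnion {v} {a} ((S \ M).erase a) M (by rwa [hsplit])
  rw [hrest] at this
  exact hdep (hI.symm _ _ _ this)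

-- `U.Nonempty` cannot be dropped: the axioms do not give `I A ∅ C`.
theorem Graphoid.indep_sdiff_of_forall_mem {S U : Finset α} {v : α} (hI : Graphoid I)
    (hUS : U ⊆ S) (hU : U.Nonempty) (h : ∀ a ∈ U, I {v} {a} (S.erase a)) :
    I {v} U (S \ U) := by
  induction hU using Finset.Nonempty.cons_induction with
  | singleton a =>
    simpa [Finset.sdiff_singleton_eq_erase] using h a (Finset.mem_singleton_self a)
  | cons a U haU hU ih =>
    rw [Finset.cons_eq_insert] at hUS h ⊢
    have hU' : I {v} U (S \ U) := ih (by grind) fun b hb => h b (by grind)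
    have := hI.intersection {v} U {a} (S \ insert a U)
      (by rw [show S \ insert a U ∪ {a} = S \ U by grind]; exact hU')
      (by rw [show S \ insert a U ∪ U = S.erase a by grind]; exact h a (by simp))
    rwa [show U ∪ {a} = insert a U by grind] at this

theorem Graphoid.indep_sdiff_of_ruParents_subset (hI : Graphoid I) {S M : Finset α} {v : α}
    (hM : ruParents I S v ⊆ M) (hMS : M ⊆ S) (hR : (S \ M).Nonempty) :
    I {v} (S \ M) M := by
  have := hI.indep_sdiff_of_forall_mem Finset.sdiff_subset hR fun a ha => by
    have haS : a ∈ S := (Finset.mem_sdiff.1 ha).1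
    have haN : a ∉ ruParents I S v := fun h => (Finset.mem_sdiff.1 ha).2 (hM h)
    exact hI.symm _ _ _ (by simpa [mem_ruParents, haS] using haN)
  rwa [Finset.sdiff_sdiff_eq_self hMS] at this

theorem Graphoid.indep_singleton_iff_of_indep_sdiff (hI : Graphoid I) {S M : Finset α}
    {v a : α} (hMS : M ⊆ S) (h : I {v} (S \ M) M) (ha : a ∈ M) :
    I {v} {a} (S.erase a) ↔ I {v} {a} (M.erase a) := by
  have hM : M.erase a ∪ {a} = M := by grind
  have hS : M.erase a ∪ (S \ M) = S.erase a := by grind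
  constructor
  · intro haS
    exact (hI.decomposition _ _ _ _ (hI.intersection {v} (S \ M) {a} (M.erase a)
      (by rwa [hM]) (by rwa [hS]))).2
  · intro haM
    have := hI.weakUnion _ _ _ _
      (hI.contraction {v} {a} (S \ M) (M.erase a) haM (by rwa [hM]))
    rwa [hS] at this

theorem Graphoid.ruParents_eq_of_subset (hI : Graphoid I) {S M : Finset α} {v : α}
    (hM : ruParents I S v ⊆ M) (hMS : M ⊆ S) : ruParents I S v = ruParents I M v := by
  rcases (S \ M).eq_empty_or_nonempty with hR | hR
  · rw [hMS.antisymm (Finset.sdiff_eq_empty_iff_subset.1 hR)]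
  have h := hI.indep_sdiff_of_ruParents_subset hM hMS hR
  ext a
  by_cases haM : a ∈ M
  · simp only [mem_ruParents, haM, hMS haM, true_and, hI.symm_iff (A := {a}),
      hI.indep_singleton_iff_of_indep_sdiff hMS h haM]
  · exact iff_of_false (fun ha => haM (hM ha)) fun ha => haM (ruParents_subset M v ha)

theorem Graphoid.indep_sdiff_pair (hI : Graphoid I) {S M : Finset α} {j k : α} (hjS : j ∉ S)
    (hMS : M ⊆ S) (hj : ruParents I S j ⊆ M) (hk : ruParents I (insert j S) k ⊆ insert j M)
    (hR : (S \ M).Nonempty) : I (S \ M) ({j} ∪ {k}) M := by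
  have hjR : I {j} (S \ M) M := hI.indep_sdiff_of_ruParents_subset hj hMS hR
  have hR' : insert j S \ insert j M = S \ M := by grind
  have hkR : I {k} (S \ M) (insert j M) := by
    have := hI.indep_sdiff_of_ruParents_subset hk (Finset.insert_subset_insert j hMS)
      (by rwa [hR'])
    rwa [hR'] at this
  refine hI.contraction _ _ _ _ (hI.symm _ _ _ hjR) ?_
  rw [Finset.union_singleton]
  exact hI.symm _ _ _ hkR

theorem Graphoid.ruParents_subset_of_swap (hI : Graphoid I) {S M : Finset α} {j k : α}
    (hjS : j ∉ S) (hMS : M ⊆ S) (hj : ruParents I S j ⊆ M)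
    (hk : ruParents I (insert j S) k ⊆ insert j M) : ruParents I S k ⊆ M := by
  rcases (S \ M).eq_empty_or_nonempty with hR | hR
  · exact (ruParents_subset S k).trans (Finset.sdiff_eq_empty_iff_subset.1 hR)
  · exact hI.ruParents_subset_of_indep hMS
      (hI.symm _ _ _ (hI.decomposition _ _ _ _ (hI.indep_sdiff_pair hjS hMS hj hk hR)).2)

theorem Graphoid.ruParents_insert_subset_of_swap (hI : Graphoid I) {S M : Finset α} {j k : α}
    (hjS : j ∉ S) (hkS : k ∉ S) (hMS : M ⊆ S) (hj : ruParents I S j ⊆ M)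
    (hk : ruParents I (insert j S) k ⊆ insert j M) :
    ruParents I (insert k S) j ⊆ insert k M := by
  rcases (S \ M).eq_empty_or_nonempty with hR | hR
  · exact (ruParents_subset _ j).trans
      (Finset.insert_subset_insert k (Finset.sdiff_eq_empty_iff_subset.1 hR))
  · have hR' : insert k S \ insert k M = S \ M := by grind
    have := hI.weakUnion _ _ _ _ (hI.indep_sdiff_pair hjS hMS hj hk hR)
    rw [Finset.union_singleton, ← hR'] at this
    exact hI.ruParents_subset_of_indep (Finset.insert_subset_insert k hMS) (hI.symm _ _ _ this)

theorem Graphoid.ruParents_swap (hI : Graphoid I) {S : Finset α} {j k : α} (hjS : j ∉ S)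
    (hkS : k ∉ S) :
    ruParents I S k =
        ruParents I ((ruParents I (insert j S) k).erase j ∪ ruParents I S j) k ∧
      ruParents I (insert k S) j =
        ruParents I (insert k ((ruParents I (insert j S) k).erase j ∪ ruParents I S j)) j := by
  set M := (ruParents I (insert j S) k).erase j ∪ ruParents I S j
  have hMS : M ⊆ S := by
    have := ruParents_subset (I := I) (insert j S) k
    have := ruParents_subset (I := I) S j
    grind
  have hj : ruParents I S j ⊆ M := Finset.subset_union_right
  have hk : ruParents I (insert j S) k ⊆ insert j M := by grind
  exact ⟨hI.ruParents_eq_of_subset (hI.ruParents_subset_of_swap hjS hMS hj hk) hMS,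
    hI.ruParents_eq_of_subset (hI.ruParents_insert_subset_of_swap hjS hkS hMS hj hk)
      (Finset.insert_subset_insert k hMS)⟩

end RUParents

section Permutation

variable {α : Type} [DecidableEq α]

theorem pre_append_cons_self {l₁ l₂ : List α} {v : α} (hv : v ∉ l₁) :
    pre (l₁ ++ v :: l₂) v = l₁.toFinset := by
  rw [pre, List.takeWhile_append_of_pos (by grind)]
  simp

theorem pre_append_cons_cons {l₁ l₂ : List α} {u v : α} (hv : v ∉ l₁) (huv : u ≠ v) :
    pre (l₁ ++ u :: v :: l₂) v = insert u l₁.toFinset := by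
  rw [show l₁ ++ u :: v :: l₂ = (l₁ ++ [u]) ++ v :: l₂ by simp,
    pre_append_cons_self (by grind)]
  ext
  simp

theorem pre_append_swap {l₁ l₂ : List α} {x y v : α} (hx : v ≠ x) (hy : v ≠ y) :
    pre (l₁ ++ x :: y :: l₂) v = pre (l₁ ++ y :: x :: l₂) v := by
  unfold pre
  rw [List.takeWhile_append, List.takeWhile_append]
  split_ifs <;> simp [hx.symm, hy.symm, Finset.insert_comm]

end Permutation

theorem mem_RUedges_s13 {I : IndepModel V} {π : List V} {a v : V} :
    (a, v) ∈ RUedges I π ↔ a ∈ ruParents I (pre π v) v := by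
  simp [RUedges, mem_ruParents]

theorem RUedges_eq_iff {I : IndepModel V} {π τ : List V} :
    RUedges I π = RUedges I τ ↔ ∀ v, ruParents I (pre π v) v = ruParents I (pre τ v) v := by
  simp only [Finset.ext_iff, Prod.forall, mem_RUedges_s13]
  exact forall_comm

/-- if two permutations with `j` immediately before `k` induce the same
DAG, then the permutations obtained by swapping `j` and `k` also induce the same DAG. -/
theorem four_perm_lemma (I : IndepModel V) (hG : Graphoid I)
    (j k : V) (δ₁ δ₂ ζ₁ ζ₂ : List V) (π₁ τ₁ π₂ τ₂ : List V)
    (hπ₁ : π₁ = δ₁ ++ j :: k :: δ₂) (hτ₁ : τ₁ = ζ₁ ++ j :: k :: ζ₂)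
    (hπ₂ : π₂ = δ₁ ++ k :: j :: δ₂) (hτ₂ : τ₂ = ζ₁ ++ k :: j :: ζ₂)
    (hp₁ : IsPermList π₁) (hp₂ : IsPermList τ₁)
    (heq : RUedges I π₁ = RUedges I τ₁) :
    RUedges I π₂ = RUedges I τ₂ := by
  subst hπ₁ hτ₁ hπ₂ hτ₂
  rw [RUedges_eq_iff] at heq ⊢
  obtain ⟨hjδ, hkδ, hjk⟩ : j ∉ δ₁ ∧ k ∉ δ₁ ∧ j ≠ k := by grind [hp₁.1]
  obtain ⟨hjζ, hkζ⟩ : j ∉ ζ₁ ∧ k ∉ ζ₁ := by grind [hp₂.1]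
  have hpk := heq k
  have hpj := heq j
  rw [pre_append_cons_cons hkδ hjk, pre_append_cons_cons hkζ hjk] at hpk
  rw [pre_append_cons_self hjδ, pre_append_cons_self hjζ] at hpj
  obtain ⟨hkδ', hjδ'⟩ :=
    hG.ruParents_swap (mt List.mem_toFinset.1 hjδ) (mt List.mem_toFinset.1 hkδ)
  obtain ⟨hkζ', hjζ'⟩ :=
    hG.ruParents_swap (mt List.mem_toFinset.1 hjζ) (mt List.mem_toFinset.1 hkζ)
  intro v
  by_cases hvk : v = k
  · subst hvk
    rw [pre_append_cons_self hkδ, pre_append_cons_self hkζ, hkδ', hkζ', hpk, hpj]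
  by_cases hvj : v = j
  · subst hvj
    rw [pre_append_cons_cons hjδ hjk.symm, pre_append_cons_cons hjζ hjk.symm, hjδ', hjζ', hpk,
      hpj]
  rw [pre_append_swap hvk hvj, pre_append_swap hvk hvj]
  exact heq v
end

section
/- Let D be i.i.d. data from a compositional graphoid P over V, and consider the grow procedure which, starting from M = ∅, repeatedly adds the variable Y ∈ Z \ M maximizing BIC(X, M ∪ {Y}), stopping when no addition increases the score. In the large sample limit (where score increase from adding Y to conditioning set S holds iff Y is dependent on X given S), the output M_gr contains the unique Markov boundary: MB(X, Z) ⊆ M_gr. -/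
open Classical
attribute [local instance] Classical.propDecidable

variable {V : Type} [Fintype V] [DecidableEq V]

/-!
When the grow procedure stops, no remaining candidate `Y ∈ Z \ M_gr` raises the score, so in the
large-sample limit `X ⊥ Y | M_gr` for each of them, and composition assembles these into
`X ⊥ Z \ M_gr | M_gr`: the output is a Markov blanket. In a graphoid, weak union and intersection
make the intersection of two Markov blankets again a Markov blanket, so minimality of the Markov
boundary `M` forces `M ∩ M_gr = M`.
-/

open Finset

section

omit [Fintype V]

variable {I : IndepModel V}

theorem CompGraphoid.indep_of_forall_singleton (hG : CompGraphoid I) {A S C : Finset V}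
    (hS : S.Nonempty) (h : ∀ y ∈ S, I A {y} C) : I A S C := by
  induction hS using Finset.Nonempty.cons_induction with
  | singleton a => exact h a (mem_singleton_self a)
  | cons a S ha hS ih =>
    rw [cons_eq_insert, insert_eq]
    exact hG.composition A {a} S C (h a (by simp)) (ih fun y hy => h y (by simp [hy]))

theorem Graphoid.markovBlanket_inter (hG : Graphoid I) {X : V} {Z M N : Finset V}
    (hM : MarkovBlanket I X Z M) (hN : MarkovBlanket I X Z N) :
    MarkovBlanket I X Z (M ∩ N) := by
  obtain ⟨hMZ, hIM⟩ := hM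
  obtain ⟨hNZ, hIN⟩ := hN
  refine ⟨inter_subset_left.trans hMZ, ?_⟩
  have hIN' : I {X} (M \ N) ((M ∩ N) ∪ (Z \ M)) := by
    have hsplit : Z \ N = (M \ N) ∪ (Z \ (M ∪ N)) := by
      ext x; have := @hMZ x; simp only [mem_union, mem_sdiff]; tauto
    have h := hG.weakUnion {X} (M \ N) (Z \ (M ∪ N)) N (hsplit ▸ hIN)
    rwa [show N ∪ (Z \ (M ∪ N)) = (M ∩ N) ∪ (Z \ M) by
      ext x; have := @hNZ x; simp only [mem_union, mem_sdiff, mem_inter]; tauto] at h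
  have hIM' : I {X} (Z \ M) ((M ∩ N) ∪ (M \ N)) := by rwa [union_comm, sdiff_union_inter]
  have h := hG.intersection {X} (Z \ M) (M \ N) (M ∩ N) hIM' hIN'
  rwa [show (Z \ M) ∪ (M \ N) = Z \ (M ∩ N) by
    ext x; have := @hMZ x; simp only [mem_union, mem_sdiff, mem_inter]; tauto] at h

theorem MarkovBoundary.subset_of_markovBlanket (hG : Graphoid I) {X : V} {Z M N : Finset V}
    (hM : MarkovBoundary I X Z M) (hN : MarkovBlanket I X Z N) : M ⊆ N := by
  by_contra hMN
  exact hM.2 (M ∩ N) (inf_lt_left.2 hMN) (hG.markovBlanket_inter hM.1 hN).2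

theorem subset_of_insert_steps {Z : Finset V} {Ms : ℕ → Finset V} {n : ℕ} (h0 : Ms 0 = ∅)
    (hstep : ∀ i < n, ∃ Y ∈ Z, Ms (i + 1) = insert Y (Ms i)) : ∀ i ≤ n, Ms i ⊆ Z := by
  intro i
  induction i with
  | zero => simp [h0]
  | succ i ih =>
    intro hi
    obtain ⟨Y, hY, hMs⟩ := hstep i hi
    rw [hMs]
    exact insert_subset hY (ih (by omega))

end

theorem grow_contains_markov_boundary_general (I : IndepModel V) (hG : CompGraphoid I)
    (X : V) (Z : Finset V)
    (s : V → Finset V → ℝ)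
    (hscore : ∀ (Y : V) (S : Finset V), Y ∉ S →
      ((s X S < s X (insert Y S) ↔ ¬ I {X} {Y} S) ∧
       (s X (insert Y S) < s X S ↔ I {X} {Y} S)))
    (n : ℕ) (Ms : ℕ → Finset V) (h0 : Ms 0 = ∅)
    (hstep : ∀ i < n, ∃ Y ∈ Z \ Ms i,
      Ms (i + 1) = insert Y (Ms i) ∧
      s X (Ms i) < s X (insert Y (Ms i)) ∧
      ∀ Y' ∈ Z \ Ms i, s X (insert Y' (Ms i)) ≤ s X (insert Y (Ms i)))
    (hterm : ∀ Y ∈ Z \ Ms n, s X (insert Y (Ms n)) ≤ s X (Ms n)) :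
    ∀ M, MarkovBoundary I X Z M → M ⊆ Ms n := by
  intro M hM
  have hMsZ : Ms n ⊆ Z := subset_of_insert_steps h0
    (fun i hi => let ⟨Y, hY, hMs, _⟩ := hstep i hi; ⟨Y, (mem_sdiff.1 hY).1, hMs⟩) n le_rfl
  have hindep : ∀ Y ∈ Z \ Ms n, I {X} {Y} (Ms n) := by
    intro Y hY
    by_contra hdep
    exact (hterm Y hY).not_gt (((hscore Y _ (mem_sdiff.1 hY).2).1).2 hdep)
  rcases (Z \ Ms n).eq_empty_or_nonempty with hZ | hZ
  · exact hM.1.1.trans (sdiff_eq_empty_iff_subset.1 hZ)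
  · exact hM.subset_of_markovBlanket hG.toGraphoid
      ⟨hMsZ, hG.indep_of_forall_singleton hZ hindep⟩

/-- in the large-sample limit, the greedy grow procedure started from
`∅` outputs a superset of the unique Markov boundary, for a compositional graphoid. -/
theorem grow_contains_markov_boundary (I : IndepModel V) (hG : CompGraphoid I)
    (X : V) (Z : Finset V) (hXZ : X ∉ Z)
    (s : V → Finset V → ℝ)
    (hscore : ∀ (Y : V) (S : Finset V), Y ∉ S →
      ((s X S < s X (insert Y S) ↔ ¬ I {X} {Y} S) ∧
       (s X (insert Y S) < s X S ↔ I {X} {Y} S)))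
    (n : ℕ) (Ms : ℕ → Finset V) (h0 : Ms 0 = ∅)
    (hstep : ∀ i < n, ∃ Y ∈ Z \ Ms i,
      Ms (i + 1) = insert Y (Ms i) ∧
      s X (Ms i) < s X (insert Y (Ms i)) ∧
      ∀ Y' ∈ Z \ Ms i, s X (insert Y' (Ms i)) ≤ s X (insert Y (Ms i)))
    (hterm : ∀ Y ∈ Z \ Ms n, s X (insert Y (Ms n)) ≤ s X (Ms n)) :
    ∀ M, MarkovBoundary I X Z M → M ⊆ Ms n :=
  grow_contains_markov_boundary_general I hG X Z s hscore n Ms h0 hstep hterm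
end
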